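/- Let ℒ be a family of finite subsets of ℕ such that ℒ_* and (ℒ(n))_* are pointwise closed for every n ∈ ℕ, and let M be an infinite subset of ℕ. If ξ = sup{ s_L((ℒ(n))_*) : n ∈ ℕ and L an infinite subset of M }, then (ℒ_*)^ξ_M ⊆ {∅}, and therefore s_M(ℒ_*) ≤ ξ + 1. -/

import Mathlib

open Ordinal Filter Set

/-- `FinLT s t` : every element of `s` is smaller than every element of `t`
(i.e. `max s < min t`, vacuously true if one of them is empty). -/
def FinLT (s t : Finset ℕ) : Prop := ∀ a ∈ s, ∀ b ∈ t, a < b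

/-- `s` is an initial segment of `t`  (`s ⪯ t`). -/
def InitSeg (s t : Finset ℕ) : Prop :=
  s ⊆ t ∧ ∀ a ∈ t, ∀ b ∈ s, a ≤ b → a ∈ s

/-- `s` is a proper initial segment of `t`  (`s ≺ t`). -/
def PInitSeg (s t : Finset ℕ) : Prop := InitSeg s t ∧ s ≠ t

/-- `[M]^{<ω}` : the finite subsets of `M`. -/
def FinSubs (M : Set ℕ) : Set (Finset ℕ) := {s | ↑s ⊆ M}

/-- `ℒ(m) = {s : {m} ∪ s ∈ ℒ and {m} < s}`. -/
def famAt (L : Set (Finset ℕ)) (m : ℕ) : Set (Finset ℕ) :=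
  {s | insert m s ∈ L ∧ ∀ a ∈ s, m < a}

/-- `ℒ*` : the family of initial segments of elements of `ℒ`. -/
def famStar (L : Set (Finset ℕ)) : Set (Finset ℕ) := {t | ∃ s ∈ L, InitSeg t s}

/-- `ℒ_*` : the family of subsets of elements of `ℒ`. -/
def famSub (L : Set (Finset ℕ)) : Set (Finset ℕ) := {t | ∃ s ∈ L, t ⊆ s}

/-- A family is Sperner if no element is a proper subset of another. -/
def Sperner (L : Set (Finset ℕ)) : Prop := ¬ ∃ s ∈ L, ∃ t ∈ L, s ⊂ t

/-- A family is hereditary if it is closed under taking subsets. -/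
def Hereditary (F : Set (Finset ℕ)) : Prop := ∀ s ∈ F, ∀ t ⊆ s, t ∈ F

/-- `IsUniform ξ ℒ M` : `ℒ` is a `ξ`-uniform family on `M`. -/
inductive IsUniform : Ordinal.{0} → Set (Finset ℕ) → Set ℕ → Prop
  | zero (M : Set ℕ) : IsUniform 0 {(∅ : Finset ℕ)} M
  | succ (ζ : Ordinal.{0}) (L : Set (Finset ℕ)) (M : Set ℕ)
      (hsub : L ⊆ FinSubs M) (hne : (∅ : Finset ℕ) ∉ L)
      (h : ∀ m ∈ M, IsUniform ζ (famAt L m) (M ∩ Set.Ioi m)) :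
      IsUniform (ζ + 1) L M
  | limit (ξ : Ordinal.{0}) (L : Set (Finset ℕ)) (M : Set ℕ)
      (hlim : Order.IsSuccLimit ξ)
      (hsub : L ⊆ FinSubs M) (hne : (∅ : Finset ℕ) ∉ L)
      (ξm : ℕ → Ordinal.{0})
      (hmono : ∀ m ∈ M, ∀ n ∈ M, m < n → ξm m < ξm n)
      (hlt : ∀ m ∈ M, ξm m < ξ)
      (hsup : ∀ β < ξ, ∃ m ∈ M, β ≤ ξm m)
      (h : ∀ m ∈ M, IsUniform (ξm m) (famAt L m) (M ∩ Set.Ioi m)) :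
      IsUniform ξ L M

/-- The characteristic function of a finite set, as an element of the
product space `ℕ → Bool` (i.e. `2^ℕ`). -/
def toChar (s : Finset ℕ) : ℕ → Bool := fun n => decide (n ∈ s)

/-- A family of finite subsets of `ℕ` is pointwise closed if its image in `2^ℕ`
(under characteristic functions) is closed in the product topology. -/
def PtwiseClosed (F : Set (Finset ℕ)) : Prop := IsClosed (toChar '' F)

/-- The first strong Cantor--Bendixson derivative of `F` on `M`:
the set of `A ∈ F ∩ [M]^{<ω}` such that `A` is a cluster point (in `2^ℕ`) of
`{B ∈ F : B ⊆ A ∪ L}` for every infinite `L ⊆ M`. -/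
def derivOne (M : Set ℕ) (F : Set (Finset ℕ)) : Set (Finset ℕ) :=
  {A | A ∈ F ∧ ↑A ⊆ M ∧ ∀ L : Set ℕ, L ⊆ M → L.Infinite →
    AccPt (toChar A) (𝓟 (toChar '' {B | B ∈ F ∧ ↑B ⊆ ↑A ∪ L}))}

/-- The iterated strong Cantor--Bendixson derivatives `(F)^ξ_M`. -/
noncomputable def CBDeriv (F : Set (Finset ℕ)) (M : Set ℕ) (o : Ordinal.{0}) :
    Set (Finset ℕ) :=
  Ordinal.limitRecOn o F (fun _ ih => derivOne M ih)
    (fun o _ ih => ⋂ (β : Ordinal.{0}) (h : β < o), ih β h)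

/-- The strong Cantor--Bendixson index `s_M(F)` : the least ordinal `ξ`
with `(F)^ξ_M = ∅`. -/
noncomputable def CBIndex (F : Set (Finset ℕ)) (M : Set ℕ) : Ordinal.{0} :=
  sInf {o : Ordinal.{0} | CBDeriv F M o = ∅}

open Topology

/-!
Write a nonempty `A ∈ (ℒ_*)^ξ_M` as `{n} ∪ B` with `n = min A < B`. Taking the section at `n`
commutes with derivation, so `B` survives `ξ` derivatives of `(ℒ_*)(n)` on `M ∩ (n, ∞)`, and
`(ℒ_*)(n)` lies in the finite union of the families `(ℒ(m))_*`, `m ≤ n`. A diagonal argument with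
the pigeonhole principle shows that whatever survives `β` derivatives of a finite union of closed
hereditary families on `P` survives `β` derivatives of one of them on some infinite `L ⊆ P`. At
limit stages this needs a cofinal sequence below `β`; it exists because, by closedness, the
derivatives strictly decrease until they vanish, so `β` is countable. As `s_L((ℒ(m))_*) ≤ ξ`,
nothing survives, so `(ℒ_*)^ξ_M ⊆ {∅}`; then `∅` has no one-point extensions left and disappears
at stage `ξ + 1`.
-/

variable {F : Set (Finset ℕ)} {M : Set ℕ}

theorem toChar_injective : Function.Injective toChar := fun s t h => by
  ext n
  simpa [toChar] using congrFun h n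

theorem tendsto_toChar_insert (A : Finset ℕ) :
    Tendsto (fun b => toChar (insert b A)) atTop (𝓝 (toChar A)) :=
  tendsto_pi_nhds.2 fun i => tendsto_atTop_of_eventually_const (i₀ := i + 1) fun b hb => by
    simp [toChar, show i ≠ b by omega]

theorem PtwiseClosed.exists_forall_subset (hF : PtwiseClosed F) {f : ℕ → Finset ℕ}
    (hf : Monotone f) (hfF : ∀ k, f k ∈ F) : ∃ s ∈ F, ∀ k, f k ⊆ s := by
  classical
  have hlim : Tendsto (toChar ∘ f) atTop (𝓝 fun i => decide (∃ k, i ∈ f k)) := by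
    refine tendsto_pi_nhds.2 fun i => ?_
    by_cases hi : ∃ k, i ∈ f k
    · obtain ⟨k, hk⟩ := hi
      exact tendsto_atTop_of_eventually_const (i₀ := k) fun j hj => by
        simpa [toChar, hf hj hk] using ⟨k, hk⟩
    · exact tendsto_atTop_of_eventually_const (i₀ := 0) fun j _ => by
        simp only [not_exists] at hi
        simp [toChar, hi]
  obtain ⟨s, hsF, hs⟩ := hF.mem_of_tendsto hlim (.of_forall fun k => ⟨f k, hfF k, rfl⟩)
  refine ⟨s, hsF, fun k i hi => ?_⟩
  have hsi := congrFun hs i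
  simp only [toChar, decide_eq_decide] at hsi
  exact hsi.2 ⟨k, hi⟩

theorem PtwiseClosed.eq_empty_of_forall_exists_insert {D : Set (Finset ℕ)} (hF : PtwiseClosed F)
    (hDF : D ⊆ F) (hD : ∀ A ∈ D, ∃ b ∉ A, insert b A ∈ D) : D = ∅ := by
  by_contra hne
  obtain ⟨A₀, hA₀⟩ := nonempty_iff_ne_empty.2 hne
  choose! g hgA hgD using hD
  set f : ℕ → Finset ℕ := fun k => (fun A => insert (g A) A)^[k] A₀
  have hsucc : ∀ k, f (k + 1) = insert (g (f k)) (f k) := fun k =>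
    Function.iterate_succ_apply' _ k A₀
  have hfD : ∀ k, f k ∈ D := fun k => by
    induction k with
    | zero => exact hA₀
    | succ k ih => rw [hsucc]; exact hgD _ ih
  have hcard : ∀ k, k ≤ (f k).card := fun k => by
    induction k with
    | zero => exact Nat.zero_le _
    | succ k ih => rw [hsucc, Finset.card_insert_of_notMem (hgA _ (hfD k))]; omega
  have hmono : Monotone f := monotone_nat_of_le_succ fun k => by
    rw [hsucc]; exact Finset.subset_insert _ _
  obtain ⟨s, -, hs⟩ := hF.exists_forall_subset hmono fun k => hDF (hfD k)
  have := Finset.card_le_card (hs (s.card + 1))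
  have := hcard (s.card + 1)
  omega

theorem PtwiseClosed.iUnion {ι : Type*} [Finite ι] {F : ι → Set (Finset ℕ)}
    (hF : ∀ i, PtwiseClosed (F i)) : PtwiseClosed (⋃ i, F i) := by
  rw [PtwiseClosed, image_iUnion]
  exact isClosed_iUnion_of_finite hF

theorem Hereditary.iUnion {ι : Type*} {F : ι → Set (Finset ℕ)} (hF : ∀ i, Hereditary (F i)) :
    Hereditary (⋃ i, F i) := by
  simp only [Hereditary, mem_iUnion]
  rintro s ⟨i, hs⟩ t hts
  exact ⟨i, hF i s hs t hts⟩

theorem Hereditary.famAt (hF : Hereditary F) (n : ℕ) : Hereditary (famAt F n) :=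
  fun _ hs _ hts => ⟨hF _ hs.1 _ (Finset.insert_subset_insert n hts), fun a ha => hs.2 a (hts ha)⟩

theorem hereditary_famSub (𝓛 : Set (Finset ℕ)) : Hereditary (famSub 𝓛) :=
  fun _ ⟨u, hu, hsu⟩ _ hts => ⟨u, hu, hts.trans hsu⟩

theorem mem_derivOne_iff (hF : Hereditary F) {A : Finset ℕ} :
    A ∈ derivOne M F ↔ A ∈ F ∧ ↑A ⊆ M ∧ {b ∈ M | insert b A ∉ F}.Finite := by
  refine and_congr_right fun _ => and_congr_right fun _ => ⟨fun h => ?_, fun h L hLM hL => ?_⟩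
  · by_contra hT
    have hU : Set.pi ↑A (fun _ => {true}) ∈ 𝓝 (toChar A) :=
      set_pi_mem_nhds A.finite_toSet fun a ha => by simpa [nhds_discrete, toChar] using ha
    obtain ⟨_, ⟨hBU, B, ⟨hBF, hBA⟩, rfl⟩, hBne⟩ :=
      accPt_iff_nhds.1 (h _ (fun b hb => hb.1) hT) _ hU
    have hAB : A ⊆ B := fun a ha => by simpa [toChar] using hBU a ha
    obtain ⟨b, hbB, hbA⟩ :=
      Finset.exists_of_ssubset (hAB.ssubset_of_ne (by rintro rfl; simp at hBne))
    exact ((hBA hbB).resolve_left hbA).2 (hF B hBF _ (Finset.insert_subset hbB hAB))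
  · have hfreq : ∃ᶠ b in atTop, b ∈ (L \ {b ∈ M | insert b A ∉ F}) \ (A : Set ℕ) :=
      Nat.frequently_atTop_iff_infinite.2 ((hL.sdiff h).sdiff A.finite_toSet)
    refine accPt_iff_frequently.2 ((tendsto_toChar_insert A).frequently (hfreq.mono ?_))
    rintro b ⟨⟨hbL, hbT⟩, hbA⟩
    refine ⟨fun h => hbA (toChar_injective h ▸ Finset.mem_insert_self b A), insert b A,
      ⟨not_not.1 fun h => hbT ⟨hLM hbL, h⟩, ?_⟩, rfl⟩
    rw [Finset.coe_insert]
    exact insert_subset (Or.inr hbL) subset_union_left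

theorem Hereditary.derivOne (hF : Hereditary F) (M : Set ℕ) : Hereditary (derivOne M F) := by
  intro s hs t hts
  rw [mem_derivOne_iff hF] at hs ⊢
  refine ⟨hF s hs.1 t hts, (Finset.coe_subset.2 hts).trans hs.2.1, hs.2.2.subset ?_⟩
  exact fun b hb => ⟨hb.1, fun h => hb.2 (hF _ h _ (Finset.insert_subset_insert b hts))⟩

theorem derivOne_mono {G : Set (Finset ℕ)} (hFG : F ⊆ G) : derivOne M F ⊆ derivOne M G :=
  fun _ ⟨hA, hAM, hacc⟩ => ⟨hFG hA, hAM, fun L hLM hL =>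
    (hacc L hLM hL).mono (principal_mono.2 (image_mono fun _ hB => ⟨hFG hB.1, hB.2⟩))⟩

theorem cbDeriv_zero (F : Set (Finset ℕ)) (M : Set ℕ) : CBDeriv F M 0 = F :=
  Ordinal.limitRecOn_zero ..

theorem cbDeriv_add_one (F : Set (Finset ℕ)) (M : Set ℕ) (o : Ordinal.{0}) :
    CBDeriv F M (o + 1) = derivOne M (CBDeriv F M o) :=
  Ordinal.limitRecOn_add_one ..

theorem cbDeriv_limit (F : Set (Finset ℕ)) (M : Set ℕ) {o : Ordinal.{0}}
    (ho : Order.IsSuccLimit o) : CBDeriv F M o = ⋂ β < o, CBDeriv F M β :=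
  Ordinal.limitRecOn_limit _ _ _ _ ho

theorem cbDeriv_antitone (F : Set (Finset ℕ)) (M : Set ℕ) : Antitone (CBDeriv F M) := by
  intro o₁ o₂ h
  induction o₂ using Ordinal.limitRecOn with
  | zero => rw [nonpos_iff_eq_zero.1 h]
  | add_one o ih =>
    rcases h.lt_or_eq with h | rfl
    · rw [cbDeriv_add_one]
      exact fun A hA => ih (Order.lt_add_one_iff.1 h) hA.1
    · exact subset_rfl
  | limit o hlim ih =>
    rcases h.lt_or_eq with h | rfl
    · rw [cbDeriv_limit F M hlim]
      exact iInter₂_subset o₁ h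
    · exact subset_rfl

theorem cbDeriv_subset (F : Set (Finset ℕ)) (M : Set ℕ) (o : Ordinal.{0}) : CBDeriv F M o ⊆ F :=
  (cbDeriv_antitone F M (zero_le (a := o))).trans_eq (cbDeriv_zero F M)

theorem cbDeriv_mono {G : Set (Finset ℕ)} (hFG : F ⊆ G) (M : Set ℕ) (o : Ordinal.{0}) :
    CBDeriv F M o ⊆ CBDeriv G M o := by
  induction o using Ordinal.limitRecOn with
  | zero => simpa only [cbDeriv_zero] using hFG
  | add_one o ih => simpa only [cbDeriv_add_one] using (derivOne_mono ih)
  | limit o hlim ih =>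
    rw [cbDeriv_limit F M hlim, cbDeriv_limit G M hlim]
    exact iInter₂_mono ih

theorem Hereditary.cbDeriv (hF : Hereditary F) (M : Set ℕ) (o : Ordinal.{0}) :
    Hereditary (CBDeriv F M o) := by
  induction o using Ordinal.limitRecOn with
  | zero => rwa [cbDeriv_zero]
  | add_one o ih => rw [cbDeriv_add_one]; exact ih.derivOne M
  | limit o hlim ih =>
    rw [cbDeriv_limit F M hlim]
    simp only [Hereditary, mem_iInter₂]
    exact fun s hs t hts β hβ => ih β hβ s (hs β hβ) t hts

theorem mem_cbDeriv_add_one_iff (hF : Hereditary F) {o : Ordinal.{0}} {A : Finset ℕ} :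
    A ∈ CBDeriv F M (o + 1) ↔
      A ∈ CBDeriv F M o ∧ ↑A ⊆ M ∧ {b ∈ M | insert b A ∉ CBDeriv F M o}.Finite := by
  rw [cbDeriv_add_one, mem_derivOne_iff (hF.cbDeriv M o)]

theorem coe_subset_of_mem_cbDeriv {o : Ordinal.{0}} (ho : o ≠ 0) {A : Finset ℕ}
    (hA : A ∈ CBDeriv F M o) : ↑A ⊆ M := by
  have hA1 := cbDeriv_antitone F M (Order.one_le_iff_ne_zero.2 ho) hA
  rw [← zero_add 1, cbDeriv_add_one] at hA1
  exact hA1.2.1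

theorem mem_cbDeriv_of_diff_finite (hF : Hereditary F) {L L' : Set ℕ} (hLL' : (L \ L').Finite)
    (o : Ordinal.{0}) {C : Finset ℕ} (hCL : ↑C ⊆ L) (hC : C ∈ CBDeriv F L' o) :
    C ∈ CBDeriv F L o := by
  induction o using Ordinal.limitRecOn generalizing C with
  | zero => rwa [cbDeriv_zero] at hC ⊢
  | add_one o ih =>
    rw [mem_cbDeriv_add_one_iff hF] at hC ⊢
    refine ⟨ih hCL hC.1, hCL, (hLL'.union hC.2.2).subset ?_⟩
    rintro b ⟨hbL, hb⟩
    by_cases hbL' : b ∈ L'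
    · refine Or.inr ⟨hbL', fun h => hb (ih ?_ h)⟩
      rw [Finset.coe_insert]
      exact insert_subset hbL hCL
    · exact Or.inl ⟨hbL, hbL'⟩
  | limit o hlim ih =>
    rw [cbDeriv_limit F _ hlim, mem_iInter₂] at hC ⊢
    exact fun β hβ => ih β hβ hCL (hC β hβ)

theorem mem_cbDeriv_of_subset (hF : Hereditary F) {L : Set ℕ} (hLM : L ⊆ M) (o : Ordinal.{0})
    {C : Finset ℕ} (hCL : ↑C ⊆ L) (hC : C ∈ CBDeriv F M o) : C ∈ CBDeriv F L o :=
  mem_cbDeriv_of_diff_finite hF (by simp [sdiff_eq_empty.2 hLM]) o hCL hC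

theorem exists_insert_mem_cbDeriv (hF : Hereditary F) {o : Ordinal.{0}} {B : Finset ℕ}
    (hB : B ∈ CBDeriv F M (o + 1)) {L : Set ℕ} (hLM : L ⊆ M) (hL : L.Infinite) (hBL : ↑B ⊆ L)
    (N : ℕ) : ∃ b ∈ L, N < b ∧ ↑(insert b B) ⊆ L ∧ insert b B ∈ CBDeriv F L o := by
  rw [mem_cbDeriv_add_one_iff hF] at hB
  obtain ⟨b, ⟨hbL, hbN⟩, hb⟩ := ((hL.sdiff (finite_Iic N)).sdiff hB.2.2).nonempty
  have hbBL : ↑(insert b B) ⊆ L := by rw [Finset.coe_insert]; exact insert_subset hbL hBL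
  exact ⟨b, hbL, not_le.1 hbN, hbBL,
    mem_cbDeriv_of_subset hF hLM o hbBL (not_not.1 fun h => hb ⟨hLM hbL, h⟩)⟩

theorem mem_cbDeriv_add_one_of_forall_insert (hF : Hereditary F) {o : Ordinal.{0}} {S : Set ℕ}
    (hS : S.Nonempty) {B : Finset ℕ} (h : ∀ b ∈ S, insert b B ∈ CBDeriv F (S ∪ ↑B) o) :
    B ∈ CBDeriv F (S ∪ ↑B) (o + 1) := by
  obtain ⟨b₀, hb₀⟩ := hS
  have hB := hF.cbDeriv _ o _ (h b₀ hb₀) B (Finset.subset_insert _ _)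
  refine (mem_cbDeriv_add_one_iff hF).2 ⟨hB, subset_union_right, finite_empty.subset ?_⟩
  rintro b ⟨hb | hb, hbad⟩
  · exact hbad (h b hb)
  · exact hbad (by rwa [Finset.insert_eq_of_mem hb])

theorem cbDeriv_eq_empty_of_add_one_eq (hF : Hereditary F) (hcl : PtwiseClosed F)
    (hM : M.Infinite) {o : Ordinal.{0}} (h : CBDeriv F M (o + 1) = CBDeriv F M o) :
    CBDeriv F M o = ∅ := by
  refine hcl.eq_empty_of_forall_exists_insert (cbDeriv_subset F M o) fun A hA => ?_
  rw [← h, mem_cbDeriv_add_one_iff hF] at hA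
  obtain ⟨b, ⟨hbM, hbA⟩, hb⟩ := ((hM.sdiff A.finite_toSet).sdiff hA.2.2).nonempty
  exact ⟨b, hbA, not_not.1 fun h => hb ⟨hbM, h⟩⟩

theorem cbDeriv_cbIndex_eq_empty (hF : Hereditary F) (hcl : PtwiseClosed F) (hM : M.Infinite) :
    CBDeriv F M (CBIndex F M) = ∅ := by
  refine csInf_mem (s := {o | CBDeriv F M o = ∅}) ?_
  obtain ⟨a, b, hab, hne⟩ : ∃ a b, CBDeriv F M a = CBDeriv F M b ∧ a ≠ b := by
    simpa [Function.Injective, and_comm] using not_injective_of_ordinal (CBDeriv F M)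
  wlog hlt : a < b generalizing a b
  · exact this b a hab.symm hne.symm (hne.lt_or_gt.resolve_left hlt)
  refine ⟨a, cbDeriv_eq_empty_of_add_one_eq hF hcl hM ?_⟩
  refine (cbDeriv_antitone F M (Order.le_succ a)).antisymm ?_
  exact hab ▸ cbDeriv_antitone F M (Order.add_one_le_of_lt hlt)

theorem exists_seq_tendsto_of_cbDeriv_nonempty (hF : Hereditary F) (hcl : PtwiseClosed F)
    (hM : M.Infinite) {o : Ordinal.{0}} (ho : Order.IsSuccLimit o)
    (hne : (CBDeriv F M o).Nonempty) :
    ∃ γ : ℕ → Ordinal.{0}, (∀ k, γ k < o) ∧ ∀ β < o, ∀ᶠ k in atTop, β ≤ γ k := by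
  have hdrop : ∀ β : Iio o, ∃ A ∈ CBDeriv F M β, A ∉ CBDeriv F M (β + 1) := fun β => by
    by_contra! h
    obtain ⟨A, hA⟩ := hne
    have hempty := cbDeriv_eq_empty_of_add_one_eq hF hcl hM
      ((cbDeriv_antitone F M (Order.le_succ β.1)).antisymm h)
    exact (hempty ▸ cbDeriv_antitone F M (le_of_lt β.2) hA : A ∈ (∅ : Set (Finset ℕ)))
  choose A hA hA' using hdrop
  have : Countable (Iio o) := Function.Injective.countable (f := A) <| .of_lt_imp_ne
    fun β β' h hAβ => hA' β (hAβ ▸ cbDeriv_antitone F M (Order.add_one_le_of_lt h) (hA β'))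
  have : Nonempty (Iio o) := ⟨⟨0, ho.bot_lt⟩⟩
  obtain ⟨γ, hγ⟩ := exists_seq_tendsto (atTop : Filter (Iio o))
  exact ⟨fun k => γ k, fun k => (γ k).2, fun β hβ => tendsto_atTop.1 hγ ⟨β, hβ⟩⟩

theorem mem_cbDeriv_famAt (hF : Hereditary F) {n : ℕ} (o : Ordinal.{0}) {B : Finset ℕ}
    (hB : ∀ a ∈ B, n < a) (hnB : insert n B ∈ CBDeriv F M o) :
    B ∈ CBDeriv (famAt F n) (M ∩ Ioi n) o := by
  induction o using Ordinal.limitRecOn generalizing B with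
  | zero => rw [cbDeriv_zero] at hnB ⊢; exact ⟨hnB, hB⟩
  | add_one o ih =>
    rw [mem_cbDeriv_add_one_iff hF] at hnB
    rw [mem_cbDeriv_add_one_iff (hF.famAt n)]
    refine ⟨ih hB hnB.1, fun a ha => ⟨hnB.2.1 (by simp [ha]), hB a ha⟩, hnB.2.2.subset ?_⟩
    rintro b ⟨⟨hbM, hbn⟩, hb⟩
    refine ⟨hbM, fun h => hb (ih ?_ ?_)⟩
    · simpa using ⟨hbn, hB⟩
    · rwa [Finset.insert_comm]
  | limit o hlim ih =>
    rw [cbDeriv_limit _ _ hlim, mem_iInter₂] at hnB ⊢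
    exact fun β hβ => ih β hβ hB (hnB β hβ)

theorem famAt_famSub_subset (𝓛 : Set (Finset ℕ)) (n : ℕ) :
    famAt (famSub 𝓛) n ⊆ ⋃ m : Fin (n + 1), famSub (famAt 𝓛 m) := by
  rintro B ⟨⟨s, hs, hBs⟩, hB⟩
  have hns : n ∈ s := hBs (Finset.mem_insert_self n B)
  set m := s.min' ⟨n, hns⟩
  have hmn : m ≤ n := s.min'_le n hns
  refine mem_iUnion.2 ⟨⟨m, Nat.lt_succ_of_le hmn⟩, s.erase m, ⟨?_, fun a ha => ?_⟩, fun a ha => ?_⟩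
  · exact (Finset.insert_erase (s.min'_mem _)).symm ▸ hs
  · exact s.min'_lt_of_mem_erase_min' _ ha
  · exact Finset.mem_erase.2 ⟨(hmn.trans_lt (hB a ha)).ne', hBs (Finset.mem_insert_of_mem ha)⟩

theorem exists_strictMono_nested {P : Set ℕ} {B : Finset ℕ} (hP : P.Infinite) (hBP : ↑B ⊆ P)
    (Q : ℕ → ℕ → Set ℕ → Prop)
    (step : ∀ k N L, L ⊆ P → L.Infinite → ↑B ⊆ L →
      ∃ c ∈ L, N < c ∧ ∃ L' ⊆ L, L'.Infinite ∧ ↑B ⊆ L' ∧ Q k c L') :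
    ∃ (c : ℕ → ℕ) (L : ℕ → Set ℕ), StrictMono c ∧ Antitone L ∧ L 0 = P ∧
      ∀ k, c k ∈ L k ∧ Q k (c k) (L (k + 1)) := by
  let S := {L : Set ℕ // L ⊆ P ∧ L.Infinite ∧ ↑B ⊆ L}
  have step' : ∀ k N (L : S), ∃ c ∈ L.1, N < c ∧ ∃ L' : S, L'.1 ⊆ L.1 ∧ Q k c L'.1 := by
    rintro k N ⟨L, hLP, hL, hBL⟩
    obtain ⟨c, hcL, hNc, L', hL'L, hL', hBL', hQ⟩ := step k N L hLP hL hBL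
    exact ⟨c, hcL, hNc, ⟨L', hL'L.trans hLP, hL', hBL'⟩, hL'L, hQ⟩
  choose c hcL hNc L' hL'L hQ using step'
  -- the state after `k` steps: the last point chosen and the current set
  let u : ℕ → ℕ × S := fun k =>
    Nat.rec (0, ⟨P, subset_rfl, hP, hBP⟩) (fun k p => (c k p.1 p.2, L' k p.1 p.2)) k
  exact ⟨fun k => c k (u k).1 (u k).2, fun k => (u k).2.1,
    strictMono_nat_of_lt_succ fun k => hNc _ _ _, antitone_nat_of_succ_le fun k => hL'L _ _ _,
    rfl, fun k => ⟨hcL _ _ _, hQ _ _ _⟩⟩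

/-- Diagonalise along the nested sequence of infinite sets produced by `step`, keeping the steps
whose index `i` is the one that the pigeonhole principle picks infinitely often. -/
theorem exists_diagonal {ι : Type*} [Finite ι] {P : Set ℕ} {B : Finset ℕ} (hP : P.Infinite)
    (hBP : ↑B ⊆ P) (Q : ι → ℕ → ℕ → Set ℕ → Prop)
    (step : ∀ k N L, L ⊆ P → L.Infinite → ↑B ⊆ L →
      ∃ c ∈ L, N < c ∧ ∃ L' ⊆ L, L'.Infinite ∧ ↑B ⊆ L' ∧ ∃ i, Q i k c L') :
    ∃ (i : ι) (c : ℕ → ℕ) (K : Set ℕ), K.Infinite ∧ c '' K ∪ ↑B ⊆ P ∧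
      (c '' K ∪ ↑B).Infinite ∧ ∀ k ∈ K, ∃ L, ((c '' K ∪ ↑B) \ L).Finite ∧ Q i k (c k) L := by
  obtain ⟨c, L, hc, hL, hL0, hcL⟩ :=
    exists_strictMono_nested hP hBP (fun k c L => ∃ i, Q i k c L) step
  choose i hi using fun k => (hcL k).2
  obtain ⟨i₀, hK⟩ := Finite.exists_infinite_fiber i
  have hK : (i ⁻¹' {i₀}).Infinite := infinite_coe_iff.1 hK
  refine ⟨i₀, c, i ⁻¹' {i₀}, hK, union_subset ?_ hBP,
    (hK.image hc.injective.injOn).mono subset_union_left, fun k hk => ⟨L (k + 1), ?_, hk ▸ hi k⟩⟩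
  · rintro _ ⟨k, -, rfl⟩
    exact hL0 ▸ hL (Nat.zero_le k) (hcL k).1
  · refine (((finite_Iic k).image c).union B.finite_toSet).subset ?_
    rintro _ ⟨⟨j, -, rfl⟩ | hb, hnot⟩
    · exact Or.inl ⟨j, mem_Iic.2 (not_lt.1 fun hkj => hnot (hL hkj (hcL j).1)), rfl⟩
    · exact Or.inr hb

theorem exists_mem_cbDeriv_of_mem_cbDeriv_iUnion {ι : Type*} [Finite ι]
    {F : ι → Set (Finset ℕ)} (hF : ∀ i, Hereditary (F i)) (hcl : ∀ i, PtwiseClosed (F i))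
    (o : Ordinal.{0}) {P : Set ℕ} {B : Finset ℕ} (hP : P.Infinite) (hBP : ↑B ⊆ P)
    (hB : B ∈ CBDeriv (⋃ i, F i) P o) :
    ∃ i, ∃ L ⊆ P, L.Infinite ∧ ↑B ⊆ L ∧ B ∈ CBDeriv (F i) L o := by
  have hU : Hereditary (⋃ i, F i) := .iUnion hF
  induction o using Ordinal.limitRecOn generalizing P B with
  | zero =>
    obtain ⟨i, hi⟩ := mem_iUnion.1 ((cbDeriv_zero _ P) ▸ hB)
    exact ⟨i, P, subset_rfl, hP, hBP, (cbDeriv_zero _ P).symm ▸ hi⟩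
  | add_one o ih =>
    obtain ⟨i, c, K, hK, hLP, hL, hQ⟩ := exists_diagonal hP hBP
      (fun i _ b L => insert b B ∈ CBDeriv (F i) L o) fun k N L hLP hL hBL => by
        obtain ⟨b, hbL, hbN, hbBL, hbB⟩ := exists_insert_mem_cbDeriv hU hB hLP hL hBL N
        obtain ⟨i, L', hL'L, hL', hbBL', hmem⟩ := ih hL hbBL hbB
        exact ⟨b, hbL, hbN, L', hL'L, hL',
          (Finset.coe_subset.2 (Finset.subset_insert b B)).trans hbBL', i, hmem⟩
    refine ⟨i, _, hLP, hL, subset_union_right,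
      mem_cbDeriv_add_one_of_forall_insert (hF i) (hK.nonempty.image c) ?_⟩
    rintro _ ⟨k, hk, rfl⟩
    obtain ⟨L, hfin, hmem⟩ := hQ k hk
    refine mem_cbDeriv_of_diff_finite (hF i) hfin o ?_ hmem
    rw [Finset.coe_insert]
    exact insert_subset (Or.inl ⟨k, hk, rfl⟩) subset_union_right
  | limit o hlim ih =>
    obtain ⟨γ, hγ, hγo⟩ :=
      exists_seq_tendsto_of_cbDeriv_nonempty hU (.iUnion hcl) hP hlim ⟨B, hB⟩
    obtain ⟨i, c, K, hK, hLP, hL, hQ⟩ := exists_diagonal hP hBP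
      (fun i k _ L => B ∈ CBDeriv (F i) L (γ k)) fun k N L hLP hL hBL => by
        obtain ⟨i, L', hL'L, hL', hBL', hmem⟩ := ih (γ k) (hγ k) hL hBL
          (mem_cbDeriv_of_subset hU hLP _ hBL (cbDeriv_antitone _ P (hγ k).le hB))
        obtain ⟨b, hbL', hbN⟩ := (hL'.sdiff (finite_Iic N)).nonempty
        exact ⟨b, hL'L hbL', not_le.1 hbN, L', hL'L, hL', hBL', i, hmem⟩
    refine ⟨i, _, hLP, hL, subset_union_right, ?_⟩
    rw [cbDeriv_limit _ _ hlim, mem_iInter₂]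
    intro β hβ
    obtain ⟨k, hk, hβk⟩ :=
      ((Nat.frequently_atTop_iff_infinite.2 hK).and_eventually (hγo β hβ)).exists
    obtain ⟨L, hfin, hmem⟩ := hQ k hk
    exact cbDeriv_antitone _ _ hβk
      (mem_cbDeriv_of_diff_finite (hF i) hfin _ subset_union_right hmem)

theorem exists_cbDeriv_famSub_famAt_nonempty {𝓛 : Set (Finset ℕ)}
    (hcl : ∀ n, PtwiseClosed (famSub (famAt 𝓛 n))) (hM : M.Infinite) {o : Ordinal.{0}}
    {A : Finset ℕ} (hA : A ∈ CBDeriv (famSub 𝓛) M o) (hA₀ : A ≠ ∅) :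
    ∃ m, ∃ L ⊆ M, L.Infinite ∧ (CBDeriv (famSub (famAt 𝓛 m)) L o).Nonempty := by
  obtain ⟨n, B, hnB, rfl⟩ : ∃ n B, (∀ a ∈ B, n < a) ∧ A = insert n B := by
    have hne := Finset.nonempty_iff_ne_empty.2 hA₀
    exact ⟨_, _, fun a => A.min'_lt_of_mem_erase_min' hne, (A.insert_erase (A.min'_mem hne)).symm⟩
  have hB : B ∈ CBDeriv (⋃ m : Fin (n + 1), famSub (famAt 𝓛 m)) (M ∩ Ioi n) o :=
    cbDeriv_mono (famAt_famSub_subset 𝓛 n) _ o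
      (mem_cbDeriv_famAt (hereditary_famSub 𝓛) o hnB hA)
  rcases eq_or_ne o 0 with rfl | ho
  · obtain ⟨m, hm⟩ := mem_iUnion.1 (cbDeriv_zero _ _ ▸ hB)
    exact ⟨m, M, subset_rfl, hM, B, (cbDeriv_zero _ M).symm ▸ hm⟩
  · have hMn : (M ∩ Ioi n).Infinite :=
      (hM.sdiff (finite_Iic n)).mono fun a ha => ⟨ha.1, mem_Ioi.2 (not_le.1 ha.2)⟩
    obtain ⟨m, L, hL, hL', -, hmem⟩ := exists_mem_cbDeriv_of_mem_cbDeriv_iUnion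
      (F := fun m : Fin (n + 1) => famSub (famAt 𝓛 m))
      (fun m => hereditary_famSub _) (fun m => hcl m) o hMn (coe_subset_of_mem_cbDeriv ho hB) hB
    exact ⟨m, L, hL.trans inter_subset_left, hL', B, hmem⟩

theorem index_upper_bound_general (𝓛 : Set (Finset ℕ))
    (hcn : ∀ n : ℕ, PtwiseClosed (famSub (famAt 𝓛 n)))
    (M : Set ℕ) (hM : M.Infinite) (ξ : Ordinal.{0})
    (hξ : ξ = sSup {o : Ordinal.{0} | ∃ (n : ℕ) (L : Set ℕ), L ⊆ M ∧ L.Infinite ∧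
        o = CBIndex (famSub (famAt 𝓛 n)) L}) :
    CBDeriv (famSub 𝓛) M ξ ⊆ {(∅ : Finset ℕ)} ∧
      CBIndex (famSub 𝓛) M ≤ ξ + 1 := by
  have hindex : ∀ n, ∀ L ⊆ M, L.Infinite → CBIndex (famSub (famAt 𝓛 n)) L ≤ ξ :=
    fun n L hLM hL => hξ ▸ le_csSup ((Ordinal.bddAbove_of_small
      (s := range fun p : ℕ × Set ℕ => CBIndex (famSub (famAt 𝓛 p.1)) p.2)).mono
        (by rintro _ ⟨n, L, -, -, rfl⟩; exact ⟨(n, L), rfl⟩)) ⟨n, L, hLM, hL, rfl⟩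
  have hsub : CBDeriv (famSub 𝓛) M ξ ⊆ {∅} := fun A hA => by
    by_contra hA₀
    obtain ⟨m, L, hLM, hL, hne⟩ := exists_cbDeriv_famSub_famAt_nonempty hcn hM hA hA₀
    have hempty := cbDeriv_cbIndex_eq_empty (hereditary_famSub _) (hcn m) hL
    exact hne.ne_empty (subset_empty_iff.1 (hempty ▸ cbDeriv_antitone _ _ (hindex m L hLM hL)))
  refine ⟨hsub, csInf_le' (eq_empty_of_forall_notMem fun A hA => ?_)⟩
  rw [mem_cbDeriv_add_one_iff (hereditary_famSub 𝓛)] at hA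
  exact hM (hA.2.2.subset fun b hb => ⟨hb, fun h => Finset.insert_ne_empty b A (hsub h)⟩)

/-- **Proposition 1.16.** If `ℒ_*` and every `(ℒ(n))_*` are pointwise closed
and `ξ = sup { s_L((ℒ(n))_*) : n ∈ ℕ, L ∈ [M] }`, then `(ℒ_*)^ξ_M ⊆ {∅}` and
hence `s_M(ℒ_*) ≤ ξ + 1`. -/
theorem index_upper_bound (𝓛 : Set (Finset ℕ)) (hc : PtwiseClosed (famSub 𝓛))
    (hcn : ∀ n : ℕ, PtwiseClosed (famSub (famAt 𝓛 n)))
    (M : Set ℕ) (hM : M.Infinite) (ξ : Ordinal.{0})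
    (hξ : ξ = sSup {o : Ordinal.{0} | ∃ (n : ℕ) (L : Set ℕ), L ⊆ M ∧ L.Infinite ∧
        o = CBIndex (famSub (famAt 𝓛 n)) L}) :
    CBDeriv (famSub 𝓛) M ξ ⊆ {(∅ : Finset ℕ)} ∧
      CBIndex (famSub 𝓛) M ≤ ξ + 1 :=
  index_upper_bound_general 𝓛 hcn M hM ξ hξ
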